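/- arXiv:1710.05802 — 2 statements merged into one kernel-verified Lean document; each statement's English description precedes it below -/
import Mathlib

section
/- Let V be a combinatorial vector field on a finite simplicial complex X of dimension d, fix 0 < γ < ε < 1/(d+1), and for σ ∈ X define A_σ := {x ∈ |σ⁺| : t_v(x) ≥ γ for all v ∈ σ⁻} ∪ |σ⁻|. Suppose 0 < δ̃ < γ and A_σ ∩ cl ⟨τ⟩_{δ̃} ≠ ∅ for simplices σ, τ ∈ X. Then either τ is a face of σ⁻ or τ = σ⁺. -/
/-- The closed geometric simplex spanned by a set `s` of vertices. -/
def gsS {V : Type*} [Fintype V] (s : Set V) : Set (V → ℝ) :=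
  {x | (∀ v, 0 ≤ x v) ∧ (∀ v, v ∉ s → x v = 0) ∧ ∑ v, x v = 1}

/-- The geometric realization of a simplicial complex `K`. -/
def geomReal {V : Type*} [Fintype V] (K : Set (Finset V)) : Set (V → ℝ) :=
  ⋃ σ ∈ K, gsS (↑σ : Set V)

/-- The closure of the `λ`-cell of a simplex `τ` inside `|X|`. -/
def clLamCell {V : Type*} [Fintype V] (K : Set (Finset V)) (lam : ℝ)
    (τ : Finset V) : Set (V → ℝ) :=
  {x | x ∈ geomReal K ∧ (∀ v ∈ τ, lam ≤ x v) ∧ ∀ v ∉ τ, x v ≤ lam}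

/-- The set `A_σ` associated with the vector `(σ⁻, σ⁺)`. -/
def Aset {V : Type*} [Fintype V] (γ : ℝ) (σm σp : Finset V) : Set (V → ℝ) :=
  {x | x ∈ gsS (↑σp : Set V) ∧ ∀ v ∈ σm, γ ≤ x v} ∪ gsS (↑σm : Set V)

/-!
A point of `cl ⟨τ⟩_δ̃` has all `τ`-coordinates at least `δ̃ > 0`, so `τ` lies in the carrier of
any simplex containing the point: `σ⁻` if the point is in `|σ⁻|`, and `σ⁺` otherwise. In the
latter case the `σ⁻`-coordinates are at least `γ > δ̃`, which forces `σ⁻ ⊆ τ`; since `σ⁺ \ σ⁻`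
has at most one vertex, `τ` is then `σ⁻` or `σ⁺`.
-/

open Finset

theorem Finset.subset_or_eq_of_card_sdiff_le_one {α : Type*} [DecidableEq α] {s t u : Finset α}
    (hst : s ⊆ t) (htu : t ⊆ u) (h : #(u \ s) ≤ 1) : t ⊆ s ∨ t = u := by
  rcases (t \ s).eq_empty_or_nonempty with hempty | hnonempty
  · exact Or.inl (sdiff_eq_empty_iff_subset.mp hempty)
  · have hsdiff : t \ s = u \ s :=
      eq_of_subset_of_card_le (sdiff_subset_sdiff htu le_rfl) (h.trans hnonempty.card_pos)
    right
    rw [← sdiff_union_of_subset hst, hsdiff, sdiff_union_of_subset (hst.trans htu)]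

theorem subset_of_mem_gsS_of_le {V : Type*} [Fintype V] {s τ : Finset V} {x : V → ℝ}
    (hx : x ∈ gsS (↑s : Set V)) {lam : ℝ} (hlam : 0 < lam) (hτ : ∀ v ∈ τ, lam ≤ x v) :
    τ ⊆ s := by
  intro v hv
  by_contra hvs
  have hzero : x v = 0 := hx.2.1 v (by simpa using hvs)
  linarith [hτ v hv]

theorem Aset_meet_cell_general {V : Type*} [Fintype V] [DecidableEq V]
    (K : Set (Finset V))
    (γ : ℝ)
    (σm σp τ : Finset V)
    -- either `σ` is critical (`σ⁻ = σ⁺`) or `σ⁻` is a facet of `σ⁺`: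
    (hcodim : σm = σp ∨ (σp \ σm).card = 1)
    (dlt : ℝ) (hd0 : 0 < dlt) (hdγ : dlt < γ)
    (hmeet : (Aset γ σm σp ∩ clLamCell K dlt τ).Nonempty) :
    τ ⊆ σm ∨ τ = σp := by
  obtain ⟨x, hA, -, hge, hle⟩ := hmeet
  rcases hA with ⟨hxp, hγm⟩ | hxm
  · have hτp : τ ⊆ σp := subset_of_mem_gsS_of_le hxp hd0 hge
    have hmτ : σm ⊆ τ := fun v hv => by
      by_contra hvτ
      linarith [hγm v hv, hle v hvτ]
    have hcard : #(σp \ σm) ≤ 1 := by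
      rcases hcodim with rfl | h
      · simp
      · exact h.le
    exact subset_or_eq_of_card_sdiff_le_one hmτ hτp hcard
  · exact Or.inl (subset_of_mem_gsS_of_le hxm hd0 hge)

/-- if `0 < δ̃ < γ` and `A_σ ∩ cl ⟨τ⟩_δ̃ ≠ ∅`, then either `τ`
is a face of `σ⁻` or `τ = σ⁺`. -/
theorem Aset_meet_cell {V : Type*} [Fintype V] [DecidableEq V]
    (K : Set (Finset V)) (d : ℕ)
    (hne : ∀ σ ∈ K, σ.Nonempty)
    (hK : ∀ σ ∈ K, ∀ τ : Finset V, τ ⊆ σ → τ.Nonempty → τ ∈ K)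
    (hdim : ∀ σ ∈ K, σ.card ≤ d + 1)
    (γ ε : ℝ) (hγ : 0 < γ) (hγε : γ < ε) (hε : ε < 1 / (d + 1))
    (σm σp τ : Finset V) (hm : σm ∈ K) (hp : σp ∈ K) (hτ : τ ∈ K)
    (hsub : σm ⊆ σp)
    -- either `σ` is critical (`σ⁻ = σ⁺`) or `σ⁻` is a facet of `σ⁺`:
    (hcodim : σm = σp ∨ (σp \ σm).card = 1)
    (dlt : ℝ) (hd0 : 0 < dlt) (hdγ : dlt < γ)
    (hmeet : (Aset γ σm σp ∩ clLamCell K dlt τ).Nonempty) :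
    τ ⊆ σm ∨ τ = σp :=
  Aset_meet_cell_general K γ σm σp τ hcodim dlt hd0 hdγ hmeet
end

section
/- Let V be a combinatorial vector field on a finite simplicial complex X of dimension d with 0 < γ < 1/(d+1). For σ ∈ X \ Fix V define A_σ := {x ∈ |σ⁺| : t_v(x) ≥ γ for all v ∈ σ⁻} ∪ |σ⁻|, B_σ := {x ∈ |σ⁺| : t_v(x) ≤ γ for some v ∈ σ⁻}, and C_σ := A_σ ∩ B_σ. Then A_σ, B_σ, and C_σ are contractible subsets of |X|. -/
open Set

section Homotopy

variable {E : Type*} [AddCommGroup E] [Module ℝ E] [TopologicalSpace E]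
  [IsTopologicalAddGroup E] [ContinuousSMul ℝ E]

theorem ContinuousMap.homotopic_of_segment_subset {X : Type*} [TopologicalSpace X] {s : Set E}
    (f g : C(X, s)) (h : ∀ x, segment ℝ (f x : E) (g x) ⊆ s) : f.Homotopic g :=
  ⟨{ toFun := fun q => ⟨AffineMap.lineMap (f q.2 : E) (g q.2) (q.1 : ℝ),
        h q.2 (lineMap_mem_segment ℝ _ _ q.1.2)⟩
     continuous_toFun := by
       refine Continuous.subtype_mk ?_ _
       simp only [AffineMap.lineMap_apply_module]
       fun_prop
     map_zero_left := fun x => by simp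
     map_one_left := fun x => by simp }⟩

theorem contractibleSpace_of_segment_retraction {s t : Set E} {p : E}
    (ht : StarConvex ℝ p t) (hp : p ∈ t) (hts : t ⊆ s) {r : E → E} (hr : ContinuousOn r s)
    (hrt : MapsTo r s t) (hseg : ∀ x ∈ s, segment ℝ x (r x) ⊆ s) : ContractibleSpace s := by
  rw [contractible_iff_id_nullhomotopic]
  let R : C(s, s) := ⟨_, hr.mapsToRestrict (hrt.mono_right hts)⟩
  refine ⟨⟨p, hts hp⟩, (ContinuousMap.homotopic_of_segment_subset _ R fun x => ?_).trans
    (ContinuousMap.homotopic_of_segment_subset R _ fun x => ?_)⟩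
  · exact hseg x x.2
  · rw [segment_symm]
    exact (ht.segment_subset (hrt x.2)).trans hts

end Homotopy

section Simplex

variable {V : Type*}

noncomputable def barycenter [DecidableEq V] (s : Finset V) : V → ℝ :=
  fun v => if v ∈ s then (s.card : ℝ)⁻¹ else 0

theorem barycenter_apply_of_mem [DecidableEq V] {s : Finset V} {v : V} (hv : v ∈ s) :
    barycenter s v = (s.card : ℝ)⁻¹ := if_pos hv

variable [Fintype V]

theorem convex_gsS (s : Set V) : Convex ℝ (gsS s) := by
  rintro x ⟨hx0, hxs, hx1⟩ y ⟨hy0, hys, hy1⟩ a b ha hb hab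
  refine ⟨fun v => ?_, fun v hv => ?_, ?_⟩
  · simp only [Pi.add_apply, Pi.smul_apply, smul_eq_mul]
    exact add_nonneg (mul_nonneg ha (hx0 v)) (mul_nonneg hb (hy0 v))
  · simp [hxs v hv, hys v hv]
  · simp [Finset.sum_add_distrib, ← Finset.mul_sum, hx1, hy1, hab]

theorem gsS_mono {s t : Set V} (h : s ⊆ t) : gsS s ⊆ gsS t :=
  fun _ ⟨hx0, hxs, hx1⟩ => ⟨hx0, fun v hv => hxs v (hv <| h ·), hx1⟩

variable [DecidableEq V]

theorem single_mem_gsS {s : Set V} {w : V} (hw : w ∈ s) : Pi.single w 1 ∈ gsS s := by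
  refine ⟨fun v => ?_, fun v hv => ?_, by simp⟩
  · by_cases h : v = w <;> simp [h]
  · simp [show v ≠ w by rintro rfl; exact hv hw]

theorem barycenter_mem_gsS {s : Finset V} (hs : s.Nonempty) :
    barycenter s ∈ gsS (↑s : Set V) := by
  refine ⟨fun v => ?_, fun v hv => if_neg hv, ?_⟩
  · unfold barycenter; split_ifs <;> positivity
  · simp [barycenter, Finset.sum_ite_mem, hs.card_pos.ne']

end Simplex

section Sets

variable {V : Type*} [Fintype V] {s t : Finset V} {γ : ℝ}

/-- With `s = σ⁻`, `t = σ⁺`: `A_σ = gsSAbove s t γ ∪ gsS s`, `B_σ = gsSBelow s t γ`. -/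
def gsSAbove (s t : Finset V) (γ : ℝ) : Set (V → ℝ) :=
  {x | x ∈ gsS (↑t : Set V) ∧ ∀ v ∈ s, γ ≤ x v}

def gsSBelow (s t : Finset V) (γ : ℝ) : Set (V → ℝ) :=
  {x | x ∈ gsS (↑t : Set V) ∧ ∃ v ∈ s, x v ≤ γ}

theorem convex_gsSAbove : Convex ℝ (gsSAbove s t γ) := by
  rintro x ⟨hxt, hxγ⟩ y ⟨hyt, hyγ⟩ a b ha hb hab
  obtain rfl : a = 1 - b := by linarith
  refine ⟨convex_gsS _ hxt hyt ha hb hab, fun v hv => ?_⟩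
  simp only [Pi.add_apply, Pi.smul_apply, smul_eq_mul]
  nlinarith [hxγ v hv, hyγ v hv]

theorem starConvex_gsSAbove_inter_gsSBelow {p : V → ℝ} (hp : p ∈ gsS ↑t)
    (hpγ : ∀ v ∈ s, p v = γ) : StarConvex ℝ p (gsSAbove s t γ ∩ gsSBelow s t γ) := by
  rintro x ⟨⟨hxt, hxγ⟩, -, u, hu, hxu⟩ a b ha hb hab
  obtain rfl : a = 1 - b := by linarith
  have hpx := convex_gsS _ hp hxt ha hb hab
  refine ⟨⟨hpx, fun v hv => ?_⟩, hpx, u, hu, ?_⟩ <;>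
    simp only [Pi.add_apply, Pi.smul_apply, smul_eq_mul, hpγ _ ‹_›]
  · nlinarith [hxγ v hv]
  · nlinarith

variable [DecidableEq V]

theorem starConvex_gsSAbove_union (hs : s.Nonempty) (hst : s ⊆ t) (hγ : γ ≤ (s.card : ℝ)⁻¹) :
    StarConvex ℝ (barycenter s) (gsSAbove s t γ ∪ gsS ↑s) := by
  have hb := barycenter_mem_gsS hs
  have hbA : barycenter s ∈ gsSAbove s t γ :=
    ⟨gsS_mono hst hb, fun v hv => by rwa [barycenter_apply_of_mem hv]⟩
  exact (convex_gsSAbove.starConvex hbA).union ((convex_gsS _).starConvex hb)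

theorem starConvex_gsSBelow {w : V} (hwt : w ∈ t) (hws : w ∉ s) (hγ : 0 ≤ γ) :
    StarConvex ℝ (Pi.single w 1) (gsSBelow s t γ) := by
  rintro x ⟨hxt, v, hv, hxv⟩ a b ha hb hab
  refine ⟨convex_gsS _ (single_mem_gsS hwt) hxt ha hb hab, v, hv, ?_⟩
  have hvw : v ≠ w := by rintro rfl; exact hws hv
  simp only [Pi.add_apply, Pi.smul_apply, Pi.single_eq_of_ne hvw, smul_eq_mul]
  nlinarith

theorem exists_mem_gsS_eq_on (hs : s.Nonempty) (hst : s ⊆ t) {w : V} (hwt : w ∈ t)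
    (hws : w ∉ s) (hγ0 : 0 ≤ γ) (hγ : γ ≤ (s.card : ℝ)⁻¹) :
    ∃ p ∈ gsS ↑t, ∀ v ∈ s, p v = γ := by
  have hcard : (0 : ℝ) < s.card := by exact_mod_cast hs.card_pos
  have hμ : s.card * γ ∈ Icc (0 : ℝ) 1 :=
    ⟨by positivity, by rwa [← le_div_iff₀' hcard, one_div]⟩
  refine ⟨_, (convex_gsS _).add_smul_sub_mem (single_mem_gsS hwt)
    (gsS_mono hst (barycenter_mem_gsS hs)) hμ, fun v hv => ?_⟩
  have hvw : v ≠ w := by rintro rfl; exact hws hv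
  simp [Pi.single_eq_of_ne hvw, barycenter_apply_of_mem hv]
  field_simp

end Sets

section RetractionParam

variable {V : Type*} {s : Finset V} (hs : s.Nonempty) {γ : ℝ}

/-- The factor by which `x - barycenter s` must be scaled for the least `s`-coordinate to become
`γ`, capped at `1`; the `max` keeps it continuous on all of `V → ℝ`. -/
noncomputable def retractionParam (hs : s.Nonempty) (γ : ℝ) (x : V → ℝ) : ℝ :=
  ((s.card : ℝ)⁻¹ - γ) / max ((s.card : ℝ)⁻¹ - s.inf' hs x) ((s.card : ℝ)⁻¹ - γ)

variable (hγ : γ < (s.card : ℝ)⁻¹)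
include hγ

theorem continuous_retractionParam : Continuous (retractionParam hs γ) := by
  refine continuous_const.div (by fun_prop) fun x => ?_
  exact (lt_max_of_lt_right (sub_pos.mpr hγ)).ne'

theorem retractionParam_mem_Icc (x : V → ℝ) : retractionParam hs γ x ∈ Icc 0 1 :=
  have hpos : 0 < (s.card : ℝ)⁻¹ - γ := sub_pos.mpr hγ
  ⟨div_nonneg hpos.le (hpos.le.trans (le_max_right _ _)),
    div_le_one_of_le₀ (le_max_right _ _) (hpos.le.trans (le_max_right _ _))⟩

theorem retractionParam_eq_one {x : V → ℝ} (h : γ ≤ s.inf' hs x) :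
    retractionParam hs γ x = 1 := by
  rw [retractionParam, max_eq_right (by linarith), div_self (sub_pos.mpr hγ).ne']

theorem retractionParam_mul_le (x : V → ℝ) :
    retractionParam hs γ x * ((s.card : ℝ)⁻¹ - s.inf' hs x) ≤ (s.card : ℝ)⁻¹ - γ := by
  have hmax : 0 < max ((s.card : ℝ)⁻¹ - s.inf' hs x) ((s.card : ℝ)⁻¹ - γ) :=
    lt_max_of_lt_right (sub_pos.mpr hγ)
  rw [retractionParam, div_mul_eq_mul_div, div_le_iff₀ hmax]
  exact mul_le_mul_of_nonneg_left (le_max_left _ _) (sub_pos.mpr hγ).le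

theorem retractionParam_mul_eq {x : V → ℝ} (h : s.inf' hs x ≤ γ) :
    retractionParam hs γ x * ((s.card : ℝ)⁻¹ - s.inf' hs x) = (s.card : ℝ)⁻¹ - γ := by
  rw [retractionParam, max_eq_left (by linarith), div_mul_cancel₀ _ (by linarith)]

end RetractionParam

section Retraction

variable {V : Type*} [DecidableEq V] {s : Finset V} (hs : s.Nonempty) {γ : ℝ}

noncomputable def retraction (hs : s.Nonempty) (γ : ℝ) (x : V → ℝ) : V → ℝ :=
  barycenter s + retractionParam hs γ x • (x - barycenter s)

theorem retraction_apply {x : V → ℝ} {v : V} (hv : v ∈ s) :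
    retraction hs γ x v =
      (s.card : ℝ)⁻¹ - retractionParam hs γ x * ((s.card : ℝ)⁻¹ - x v) := by
  simp only [retraction, Pi.add_apply, Pi.smul_apply, Pi.sub_apply, smul_eq_mul,
    barycenter_apply_of_mem hv]
  ring

variable (hγ : γ < (s.card : ℝ)⁻¹)
include hγ

theorem continuous_retraction : Continuous (retraction hs γ) := by
  have := continuous_retractionParam hs hγ
  unfold retraction
  fun_prop

theorem retraction_mem_gsS [Fintype V] {u : Set V} (hb : barycenter s ∈ gsS u) {x : V → ℝ}
    (hx : x ∈ gsS u) : retraction hs γ x ∈ gsS u :=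
  (convex_gsS u).add_smul_sub_mem hb hx (retractionParam_mem_Icc hs hγ x)

theorem retraction_eq_self {x : V → ℝ} (h : γ ≤ s.inf' hs x) : retraction hs γ x = x := by
  simp [retraction, retractionParam_eq_one hs hγ h]

theorem le_retraction_apply (x : V → ℝ) {v : V} (hv : v ∈ s) : γ ≤ retraction hs γ x v := by
  rw [retraction_apply hs hv]
  have := retractionParam_mul_le hs hγ x
  have := mul_le_mul_of_nonneg_left (sub_le_sub_left (Finset.inf'_le x hv) (s.card : ℝ)⁻¹)
    (retractionParam_mem_Icc hs hγ x).1
  linarith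

theorem retraction_apply_of_eq_inf' {x : V → ℝ} {v : V} (hv : v ∈ s)
    (hxv : s.inf' hs x = x v) (hle : x v ≤ γ) : retraction hs γ x v = γ := by
  rw [retraction_apply hs hv, ← hxv, retractionParam_mul_eq hs hγ (hxv ▸ hle)]
  ring

end Retraction

theorem contractibleSpace_gsSBelow {V : Type*} [Fintype V] [DecidableEq V] {s t : Finset V}
    {γ : ℝ} {w : V} (hs : s.Nonempty) (hwt : w ∈ t) (hws : w ∉ s) (hγ : 0 ≤ γ) :
    ContractibleSpace ↥(gsSBelow s t γ) := by
  obtain ⟨v, hv⟩ := hs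
  have hvw : v ≠ w := by rintro rfl; exact hws hv
  exact (starConvex_gsSBelow hwt hws hγ).contractibleSpace
    ⟨_, single_mem_gsS hwt, v, hv, by simpa [Pi.single_eq_of_ne hvw]⟩

section Contractible

variable {V : Type*} [Fintype V] [DecidableEq V] {s t : Finset V} (hs : s.Nonempty) {γ : ℝ}
  (hst : s ⊆ t)
include hs hst

theorem contractibleSpace_gsSAbove_union (hγ : γ ≤ (s.card : ℝ)⁻¹) :
    ContractibleSpace ↥(gsSAbove s t γ ∪ gsS ↑s) :=
  (starConvex_gsSAbove_union hs hst hγ).contractibleSpace ⟨_, Or.inr (barycenter_mem_gsS hs)⟩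

variable (hγ : γ < (s.card : ℝ)⁻¹)
include hγ

theorem mapsTo_retraction_gsSBelow :
    MapsTo (retraction hs γ) (gsSBelow s t γ) (gsSAbove s t γ ∩ gsSBelow s t γ) := by
  rintro x ⟨hxt, u, hu, hxu⟩
  obtain ⟨v, hv, hxv⟩ := s.exists_mem_eq_inf' hs x
  have hrt := retraction_mem_gsS hs hγ (gsS_mono hst (barycenter_mem_gsS hs)) hxt
  exact ⟨⟨hrt, fun u hu => le_retraction_apply hs hγ x hu⟩, hrt, v, hv,
    (retraction_apply_of_eq_inf' hs hγ hv hxv (hxv ▸ (Finset.inf'_le x hu).trans hxu)).le⟩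

theorem segment_retraction_subset {x : V → ℝ}
    (hx : x ∈ (gsSAbove s t γ ∪ gsS ↑s) ∩ gsSBelow s t γ) :
    segment ℝ x (retraction hs γ x) ⊆ (gsSAbove s t γ ∪ gsS ↑s) ∩ gsSBelow s t γ := by
  obtain ⟨⟨hxt, hxγ⟩ | hxs, hxB⟩ := hx
  · rw [retraction_eq_self hs hγ (Finset.le_inf' hs x hxγ), segment_same]
    exact singleton_subset_iff.mpr ⟨Or.inl ⟨hxt, hxγ⟩, hxB⟩
  obtain ⟨-, u, hu, hxu⟩ := hxB
  obtain ⟨v, hv, hxv⟩ := s.exists_mem_eq_inf' hs x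
  have hxvγ : x v ≤ γ := hxv ▸ (Finset.inf'_le x hu).trans hxu
  -- both ends lie in the convex set of points of `|s|` whose `v`-coordinate is at most `γ`
  have hconv : Convex ℝ (gsS ↑s ∩ LinearMap.proj v ⁻¹' Iic γ) :=
    (convex_gsS _).inter ((convex_Iic γ).linear_preimage _)
  refine (hconv.segment_subset ⟨hxs, hxvγ⟩ ⟨retraction_mem_gsS hs hγ (barycenter_mem_gsS hs) hxs,
    (retraction_apply_of_eq_inf' hs hγ hv hxv hxvγ).le⟩).trans ?_
  rintro z ⟨hzs, hzv⟩
  exact ⟨Or.inr hzs, gsS_mono hst hzs, v, hv, hzv⟩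

theorem contractibleSpace_gsSAbove_union_inter_gsSBelow {w : V} (hwt : w ∈ t) (hws : w ∉ s)
    (hγ0 : 0 ≤ γ) : ContractibleSpace ↥((gsSAbove s t γ ∪ gsS ↑s) ∩ gsSBelow s t γ) := by
  obtain ⟨p, hpt, hpγ⟩ := exists_mem_gsS_eq_on hs hst hwt hws hγ0 hγ.le
  have hp : p ∈ gsSAbove s t γ ∩ gsSBelow s t γ := by
    obtain ⟨v, hv⟩ := hs
    exact ⟨⟨hpt, fun u hu => (hpγ u hu).ge⟩, hpt, v, hv, (hpγ v hv).le⟩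
  exact contractibleSpace_of_segment_retraction (starConvex_gsSAbove_inter_gsSBelow hpt hpγ) hp
    (inter_subset_inter_left _ subset_union_left) (continuous_retraction hs hγ).continuousOn
    ((mapsTo_retraction_gsSBelow hs hst hγ).mono_left inter_subset_right)
    fun _ => segment_retraction_subset hs hst hγ

end Contractible

theorem ABC_contractible_general {V : Type*} [Fintype V] [DecidableEq V]
    (K : Set (Finset V)) (d : ℕ)
    (hdim : ∀ σ ∈ K, σ.card ≤ d + 1)
    (γ : ℝ) (hγ0 : 0 < γ) (hγ : γ < 1 / (d + 1))
    (σm σp : Finset V) (hm : σm ∈ K)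
    (hmne : σm.Nonempty) (hsub : σm ⊆ σp)
    (hcodim : (σp \ σm).card = 1) :
    ContractibleSpace
      (↥({x | x ∈ gsS (↑σp : Set V) ∧ ∀ v ∈ σm, γ ≤ x v} ∪ gsS (↑σm : Set V))) ∧
    ContractibleSpace
      (↥{x | x ∈ gsS (↑σp : Set V) ∧ ∃ v ∈ σm, x v ≤ γ}) ∧
    ContractibleSpace
      (↥(({x | x ∈ gsS (↑σp : Set V) ∧ ∀ v ∈ σm, γ ≤ x v} ∪ gsS (↑σm : Set V)) ∩
          {x | x ∈ gsS (↑σp : Set V) ∧ ∃ v ∈ σm, x v ≤ γ})) := by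
  obtain ⟨w, hw⟩ := Finset.card_eq_one.mp hcodim
  obtain ⟨hwp, hwm⟩ := Finset.mem_sdiff.mp (hw ▸ Finset.mem_singleton_self w)
  have hγm : γ < (σm.card : ℝ)⁻¹ := by
    refine hγ.trans_le ?_
    rw [one_div]
    exact inv_anti₀ (by exact_mod_cast hmne.card_pos) (by exact_mod_cast hdim σm hm)
  exact ⟨contractibleSpace_gsSAbove_union hmne hsub hγm.le,
    contractibleSpace_gsSBelow hmne hwp hwm hγ0.le,
    contractibleSpace_gsSAbove_union_inter_gsSBelow hmne hsub hγm hwp hwm hγ0.le⟩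

/-- for a non-critical vector `(σ⁻, σ⁺)` of a combinatorial
vector field (so that `σ⁻` is a facet of `σ⁺`) and `0 < γ < 1/(d+1)`, the
sets `A_σ`, `B_σ` and `C_σ = A_σ ∩ B_σ` are contractible. -/
theorem ABC_contractible {V : Type*} [Fintype V] [DecidableEq V]
    (K : Set (Finset V)) (d : ℕ)
    (hne : ∀ σ ∈ K, σ.Nonempty)
    (hK : ∀ σ ∈ K, ∀ τ : Finset V, τ ⊆ σ → τ.Nonempty → τ ∈ K)
    (hdim : ∀ σ ∈ K, σ.card ≤ d + 1)
    (γ : ℝ) (hγ0 : 0 < γ) (hγ : γ < 1 / (d + 1))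
    (σm σp : Finset V) (hm : σm ∈ K) (hp : σp ∈ K)
    (hmne : σm.Nonempty) (hsub : σm ⊆ σp) (hneq : σm ≠ σp)
    (hcodim : (σp \ σm).card = 1) :
    ContractibleSpace
      (↥({x | x ∈ gsS (↑σp : Set V) ∧ ∀ v ∈ σm, γ ≤ x v} ∪ gsS (↑σm : Set V))) ∧
    ContractibleSpace
      (↥{x | x ∈ gsS (↑σp : Set V) ∧ ∃ v ∈ σm, x v ≤ γ}) ∧
    ContractibleSpace
      (↥(({x | x ∈ gsS (↑σp : Set V) ∧ ∀ v ∈ σm, γ ≤ x v} ∪ gsS (↑σm : Set V)) ∩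
          {x | x ∈ gsS (↑σp : Set V) ∧ ∃ v ∈ σm, x v ≤ γ})) :=
  ABC_contractible_general K d hdim γ hγ0 hγ σm σp hm hmne hsub hcodim
end
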